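/- (Suboptimality recursion for approximate H-step lookahead.) In a finite discounted MDP with |r(s,a)| ≤ Rmax for all (s,a), let V̂ : S → ℝ satisfy max_{s∈S} |V*(s) − V̂(s)| ≤ ε_v, fix H ≥ 1 and δ ≥ 0, and suppose W : S → ℝ is a bounded function such that for every s ∈ S there is an H-step policy π^s satisfying both (i) W(s) = Σ_{t=0}^{H−1} γ^t Σ_{s'} d_t(s')·r(s',π^s_t(s')) + γ^H Σ_{s'} d_H(s')·W(s'), where the d_t are the state distributions of π^s from s under the true model p, and (ii) max_π L_{H,V̂}(s,π;p) − L_{H,V̂}(s,π^s;p) ≤ δ, the maximum being over all H-step policies π. Then sup_{s∈S} (V*(s) − W(s)) ≤ (δ + 2·γ^H·ε_v)/(1−γ^H). -/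

import Mathlib

/-- State distribution at time `t` of a (possibly non-stationary) deterministic policy `π`
started from `s0`, under transition model `N`. -/
noncomputable def stateDist {S A : Type*} [Fintype S] [DecidableEq S]
    (N : S → A → S → ℝ) (π : ℕ → S → A) (s0 : S) : ℕ → S → ℝ
  | 0 => fun s => if s = s0 then 1 else 0
  | t + 1 => fun s' => ∑ s : S, stateDist N π s0 t s * N s (π t s) s'

/-- Discounted value of a (possibly non-stationary) deterministic policy. -/
noncomputable def value {S A : Type*} [Fintype S] [DecidableEq S]
    (p : S → A → S → ℝ) (r : S → A → ℝ) (γ : ℝ) (π : ℕ → S → A) (s0 : S) : ℝ :=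
  ∑' t : ℕ, γ ^ t * ∑ s : S, stateDist p π s0 t s * r s (π t s)

/-- Optimal value function: supremum of values over all deterministic policies. -/
noncomputable def vStar {S A : Type*} [Fintype S] [DecidableEq S]
    (p : S → A → S → ℝ) (r : S → A → ℝ) (γ : ℝ) (s0 : S) : ℝ :=
  ⨆ π : ℕ → S → A, value p r γ π s0

/-- H-step lookahead objective of an H-step policy `π` (only its first `H` maps are used),
under transition model `N`, with terminal value function `Vhat`. -/
noncomputable def lookahead {S A : Type*} [Fintype S] [DecidableEq S]
    (N : S → A → S → ℝ) (r : S → A → ℝ) (γ : ℝ) (Vhat : S → ℝ) (H : ℕ)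
    (π : ℕ → S → A) (s : S) : ℝ :=
  (∑ t ∈ Finset.range H, γ ^ t * ∑ s' : S, stateDist N π s t s' * r s' (π t s')) +
    γ ^ H * ∑ s' : S, stateDist N π s H s' * Vhat s'

/-!
Let `M = max_s (V*(s) - W(s))`. The Bellman principle gives `V*(s) ≤ max_π L_{H,V*}(s, π)`.
Swapping the terminal values `V*` and `V̂` moves any lookahead objective by at most `γ^H ε_v`;
doing so once on the maximum and once at `π^s` costs `2 γ^H ε_v`, the approximate optimality
of `π^s` costs `δ`, and bounding `V* ≤ W + M` at `π^s` costs `γ^H M`, while the fixed-point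
equation identifies `L_{H,W}(s, π^s)` with `W(s)`. Hence `M ≤ δ + 2 γ^H ε_v + γ^H M`.
-/

open Finset

section WeightedAverage

variable {S : Type*} [Fintype S] {w f : S → ℝ} {C : ℝ}

lemma sum_mul_le_of_le (hw : ∀ s, 0 ≤ w s) (hw1 : ∑ s, w s = 1) (hf : ∀ s, f s ≤ C) :
    ∑ s, w s * f s ≤ C :=
  calc ∑ s, w s * f s ≤ ∑ s, w s * C :=
        sum_le_sum fun s _ => mul_le_mul_of_nonneg_left (hf s) (hw s)
    _ = C := by rw [← sum_mul, hw1, one_mul]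

lemma abs_sum_mul_le_of_abs_le (hw : ∀ s, 0 ≤ w s) (hw1 : ∑ s, w s = 1)
    (hf : ∀ s, |f s| ≤ C) : |∑ s, w s * f s| ≤ C := by
  have hneg := sum_mul_le_of_le (f := fun s => -f s) hw hw1
    fun s => (neg_le_abs (f s)).trans (hf s)
  simp only [mul_neg, sum_neg_distrib] at hneg
  exact abs_le.2 ⟨by linarith, sum_mul_le_of_le hw hw1 fun s => le_of_abs_le (hf s)⟩

end WeightedAverage

section StateDist

variable {S A : Type*} [Fintype S] [DecidableEq S] {p : S → A → S → ℝ}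

lemma stateDist_nonneg (hp : ∀ s a s', 0 ≤ p s a s') (π : ℕ → S → A) (s0 : S) (t : ℕ)
    (s : S) : 0 ≤ stateDist p π s0 t s := by
  induction t generalizing s with
  | zero => simp only [stateDist]; split <;> norm_num
  | succ t ih => exact sum_nonneg fun s' _ => mul_nonneg (ih s') (hp _ _ _)

lemma sum_stateDist (hp : ∀ s a, ∑ s', p s a s' = 1) (π : ℕ → S → A) (s0 : S) (t : ℕ) :
    ∑ s, stateDist p π s0 t s = 1 := by
  induction t with
  | zero => simp [stateDist]
  | succ t ih =>
    simp only [stateDist]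
    rw [sum_comm]
    simp_rw [← mul_sum, hp, mul_one]
    exact ih

lemma stateDist_add (π : ℕ → S → A) (s0 : S) (H t : ℕ) (s'' : S) :
    stateDist p π s0 (H + t) s'' =
      ∑ s', stateDist p π s0 H s' * stateDist p (fun u => π (H + u)) s' t s'' := by
  induction t generalizing s'' with
  | zero => simp [stateDist]
  | succ t ih =>
    rw [← add_assoc]
    simp only [stateDist]
    simp_rw [ih, sum_mul, mul_sum, mul_assoc]
    exact sum_comm

end StateDist

section Value

variable {S A : Type*} [Fintype S] [DecidableEq S] {p : S → A → S → ℝ} {r : S → A → ℝ}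
  {γ Rmax : ℝ}

lemma abs_expected_reward_le (hp_nonneg : ∀ s a s', 0 ≤ p s a s')
    (hp_sum : ∀ s a, ∑ s', p s a s' = 1) (hr : ∀ s a, |r s a| ≤ Rmax) (π : ℕ → S → A)
    (s0 : S) (t : ℕ) : |∑ s, stateDist p π s0 t s * r s (π t s)| ≤ Rmax :=
  abs_sum_mul_le_of_abs_le (stateDist_nonneg hp_nonneg π s0 t) (sum_stateDist hp_sum π s0 t)
    fun s => hr s _

lemma summable_discounted_reward (hp_nonneg : ∀ s a s', 0 ≤ p s a s')
    (hp_sum : ∀ s a, ∑ s', p s a s' = 1) (hγ0 : 0 ≤ γ) (hγ1 : γ < 1)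
    (hr : ∀ s a, |r s a| ≤ Rmax) (π : ℕ → S → A) (s0 : S) :
    Summable fun t => γ ^ t * ∑ s, stateDist p π s0 t s * r s (π t s) := by
  refine ((summable_geometric_of_lt_one hγ0 hγ1).mul_right Rmax).of_norm_bounded fun t => ?_
  rw [Real.norm_eq_abs, abs_mul, abs_of_nonneg (pow_nonneg hγ0 t)]
  exact mul_le_mul_of_nonneg_left (abs_expected_reward_le hp_nonneg hp_sum hr π s0 t)
    (pow_nonneg hγ0 t)

lemma value_le (hp_nonneg : ∀ s a s', 0 ≤ p s a s') (hp_sum : ∀ s a, ∑ s', p s a s' = 1)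
    (hγ0 : 0 ≤ γ) (hγ1 : γ < 1) (hr : ∀ s a, |r s a| ≤ Rmax) (π : ℕ → S → A) (s0 : S) :
    value p r γ π s0 ≤ Rmax / (1 - γ) := by
  rw [value, div_eq_mul_inv, mul_comm, ← tsum_geometric_of_lt_one hγ0 hγ1, ← tsum_mul_right]
  exact (summable_discounted_reward hp_nonneg hp_sum hγ0 hγ1 hr π s0).tsum_le_tsum
    (fun t => mul_le_mul_of_nonneg_left (le_of_abs_le
      (abs_expected_reward_le hp_nonneg hp_sum hr π s0 t)) (pow_nonneg hγ0 t))
    ((summable_geometric_of_lt_one hγ0 hγ1).mul_right Rmax)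

lemma value_le_vStar (hp_nonneg : ∀ s a s', 0 ≤ p s a s') (hp_sum : ∀ s a, ∑ s', p s a s' = 1)
    (hγ0 : 0 ≤ γ) (hγ1 : γ < 1) (hr : ∀ s a, |r s a| ≤ Rmax) (π : ℕ → S → A) (s0 : S) :
    value p r γ π s0 ≤ vStar p r γ s0 :=
  le_ciSup ⟨Rmax / (1 - γ), Set.forall_mem_range.2 fun π =>
    value_le hp_nonneg hp_sum hγ0 hγ1 hr π s0⟩ π

lemma value_eq_lookahead_value_shift (hp_nonneg : ∀ s a s', 0 ≤ p s a s')
    (hp_sum : ∀ s a, ∑ s', p s a s' = 1) (hγ0 : 0 ≤ γ) (hγ1 : γ < 1)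
    (hr : ∀ s a, |r s a| ≤ Rmax) (π : ℕ → S → A) (s0 : S) (H : ℕ) :
    value p r γ π s0 = lookahead p r γ (value p r γ fun u => π (H + u)) H π s0 := by
  have hshift : ∀ t, γ ^ (t + H) * ∑ s, stateDist p π s0 (t + H) s * r s (π (t + H) s) =
      γ ^ H * ∑ s', stateDist p π s0 H s' *
        (γ ^ t * ∑ s, stateDist p (fun u => π (H + u)) s' t s * r s (π (H + t) s)) := by
    intro t
    simp_rw [add_comm t H, stateDist_add π s0 H t, sum_mul, mul_sum]
    rw [sum_comm]
    refine sum_congr rfl fun s' _ => sum_congr rfl fun s _ => ?_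
    ring
  rw [value, ← (summable_discounted_reward hp_nonneg hp_sum hγ0 hγ1 hr π s0).sum_add_tsum_nat_add H,
    tsum_congr hshift, tsum_mul_left, Summable.tsum_finsetSum fun s' _ =>
      (summable_discounted_reward hp_nonneg hp_sum hγ0 hγ1 hr _ s').mul_left _]
  simp_rw [tsum_mul_left]
  rfl

end Value

section Lookahead

variable {S A : Type*} [Fintype S] [DecidableEq S] {p : S → A → S → ℝ} {r : S → A → ℝ}
  {γ Rmax : ℝ} {H : ℕ}

lemma lookahead_le_add (hp_nonneg : ∀ s a s', 0 ≤ p s a s')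
    (hp_sum : ∀ s a, ∑ s', p s a s' = 1) (hγ0 : 0 ≤ γ) {V₁ V₂ : S → ℝ} {c : ℝ}
    (hV : ∀ s, V₁ s ≤ V₂ s + c) (π : ℕ → S → A) (s : S) :
    lookahead p r γ V₁ H π s ≤ lookahead p r γ V₂ H π s + γ ^ H * c := by
  have hdiff := mul_le_mul_of_nonneg_left
    (sum_mul_le_of_le (f := fun s => V₁ s - V₂ s) (stateDist_nonneg hp_nonneg π s H)
      (sum_stateDist hp_sum π s H) fun s => sub_le_iff_le_add'.2 (hV s)) (pow_nonneg hγ0 H)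
  simp only [mul_sub, sum_sub_distrib] at hdiff
  unfold lookahead
  linarith

lemma bddAbove_range_lookahead (hp_nonneg : ∀ s a s', 0 ≤ p s a s')
    (hp_sum : ∀ s a, ∑ s', p s a s' = 1) (hγ0 : 0 ≤ γ) (hr : ∀ s a, |r s a| ≤ Rmax)
    (V : S → ℝ) (s : S) : BddAbove (Set.range fun π => lookahead p r γ V H π s) := by
  obtain ⟨C, hC⟩ := Finite.bddAbove_range V
  refine ⟨∑ t ∈ range H, γ ^ t * Rmax + γ ^ H * C, Set.forall_mem_range.2 fun π => ?_⟩
  refine add_le_add (sum_le_sum fun t _ => mul_le_mul_of_nonneg_left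
    (le_of_abs_le (abs_expected_reward_le hp_nonneg hp_sum hr π s t)) (pow_nonneg hγ0 t))
    (mul_le_mul_of_nonneg_left ?_ (pow_nonneg hγ0 H))
  exact sum_mul_le_of_le (stateDist_nonneg hp_nonneg π s H) (sum_stateDist hp_sum π s H)
    fun s' => hC (Set.mem_range_self s')

lemma iSup_lookahead_le_add [Nonempty A] (hp_nonneg : ∀ s a s', 0 ≤ p s a s')
    (hp_sum : ∀ s a, ∑ s', p s a s' = 1) (hγ0 : 0 ≤ γ) (hr : ∀ s a, |r s a| ≤ Rmax)
    {V₁ V₂ : S → ℝ} {c : ℝ} (hV : ∀ s, V₁ s ≤ V₂ s + c) (s : S) :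
    ⨆ π, lookahead p r γ V₁ H π s ≤ (⨆ π, lookahead p r γ V₂ H π s) + γ ^ H * c :=
  ciSup_le fun π => (lookahead_le_add hp_nonneg hp_sum hγ0 hV π s).trans <| add_le_add_left
    (le_ciSup (bddAbove_range_lookahead hp_nonneg hp_sum hγ0 hr V₂ s) π) _

lemma vStar_le_iSup_lookahead [Nonempty A] (hp_nonneg : ∀ s a s', 0 ≤ p s a s')
    (hp_sum : ∀ s a, ∑ s', p s a s' = 1) (hγ0 : 0 ≤ γ) (hγ1 : γ < 1)
    (hr : ∀ s a, |r s a| ≤ Rmax) (s : S) :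
    vStar p r γ s ≤ ⨆ π, lookahead p r γ (vStar p r γ) H π s :=
  ciSup_le fun π => by
    rw [value_eq_lookahead_value_shift hp_nonneg hp_sum hγ0 hγ1 hr π s H]
    refine (lookahead_le_add hp_nonneg hp_sum hγ0 (V₂ := vStar p r γ) (c := 0) (fun s' => ?_) π s).trans ?_
    · rw [add_zero]
      exact value_le_vStar hp_nonneg hp_sum hγ0 hγ1 hr _ s'
    · rw [mul_zero, add_zero]
      exact le_ciSup (bddAbove_range_lookahead hp_nonneg hp_sum hγ0 hr _ s) π

end Lookahead

theorem approx_h_step_lookahead_recursion_general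
    {S A : Type*} [Fintype S] [DecidableEq S] [Nonempty S]
    (p : S → A → S → ℝ) (r : S → A → ℝ) (γ Rmax εv δ : ℝ) (H : ℕ)
    (hp_nonneg : ∀ s a s', 0 ≤ p s a s')
    (hp_sum : ∀ s a, ∑ s' : S, p s a s' = 1)
    (hγ0 : 0 < γ) (hγ1 : γ < 1) (hH : 1 ≤ H)
    (hr : ∀ s a, |r s a| ≤ Rmax)
    (Vhat : S → ℝ)
    (hεv : ∀ s, |vStar p r γ s - Vhat s| ≤ εv)
    (W : S → ℝ)
    (σ : S → ℕ → S → A)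
    (hW : ∀ s, W s =
      (∑ t ∈ Finset.range H, γ ^ t * ∑ s' : S, stateDist p (σ s) s t s' * r s' (σ s t s')) +
        γ ^ H * ∑ s' : S, stateDist p (σ s) s H s' * W s')
    (hσ : ∀ s, (⨆ π : ℕ → S → A, lookahead p r γ Vhat H π s) -
      lookahead p r γ Vhat H (σ s) s ≤ δ) :
    (⨆ s : S, (vStar p r γ s - W s)) ≤ (δ + 2 * γ ^ H * εv) / (1 - γ ^ H) := by
  have : Nonempty A := ⟨σ (Classical.arbitrary S) 0 (Classical.arbitrary S)⟩
  set M := ⨆ s, (vStar p r γ s - W s)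
  have hvStar_le : ∀ s, vStar p r γ s ≤ W s + M := fun s => by
    linarith [le_ciSup (Set.finite_range fun s => vStar p r γ s - W s).bddAbove s]
  have hvStar_le_Vhat : ∀ s, vStar p r γ s ≤ Vhat s + εv := fun s => by
    linarith [le_of_abs_le (hεv s)]
  have hVhat_le_vStar : ∀ s, Vhat s ≤ vStar p r γ s + εv := fun s => by
    linarith [neg_le_of_abs_le (hεv s)]
  have hM : M ≤ δ + 2 * γ ^ H * εv + γ ^ H * M := ciSup_le fun s => by
    have hstar := vStar_le_iSup_lookahead (H := H) hp_nonneg hp_sum hγ0.le hγ1 hr s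
    have hmax := iSup_lookahead_le_add (H := H) hp_nonneg hp_sum hγ0.le hr hvStar_le_Vhat s
    have hVhat := lookahead_le_add (r := r) (H := H) hp_nonneg hp_sum hγ0.le hVhat_le_vStar (σ s) s
    have hvStar_W := lookahead_le_add (r := r) (H := H) hp_nonneg hp_sum hγ0.le hvStar_le (σ s) s
    have hfix : lookahead p r γ W H (σ s) s = W s := (hW s).symm
    linarith [hσ s]
  rw [le_div_iff₀ (sub_pos.2 (pow_lt_one₀ hγ0.le hγ1 (by omega)))]
  linarith

/-- Suboptimality recursion for approximate H-step lookahead: if `W` satisfies the H-step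
fixed-point equation along policies `σ s` that are `δ`-approximate maximizers of the H-step
lookahead objective under the true model, then the suboptimality of `W` is bounded. -/
theorem approx_h_step_lookahead_recursion
    {S A : Type*} [Fintype S] [DecidableEq S] [Nonempty S] [Fintype A] [Nonempty A]
    (p : S → A → S → ℝ) (r : S → A → ℝ) (γ Rmax εv δ : ℝ) (H : ℕ)
    (hp_nonneg : ∀ s a s', 0 ≤ p s a s')
    (hp_sum : ∀ s a, ∑ s' : S, p s a s' = 1)
    (hγ0 : 0 < γ) (hγ1 : γ < 1) (hH : 1 ≤ H) (hδ : 0 ≤ δ)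
    (hr : ∀ s a, |r s a| ≤ Rmax)
    (Vhat : S → ℝ)
    (hεv : ∀ s, |vStar p r γ s - Vhat s| ≤ εv)
    (W : S → ℝ) (hWbdd : ∃ B, ∀ s, |W s| ≤ B)
    (σ : S → ℕ → S → A)
    (hW : ∀ s, W s =
      (∑ t ∈ Finset.range H, γ ^ t * ∑ s' : S, stateDist p (σ s) s t s' * r s' (σ s t s')) +
        γ ^ H * ∑ s' : S, stateDist p (σ s) s H s' * W s')
    (hσ : ∀ s, (⨆ π : ℕ → S → A, lookahead p r γ Vhat H π s) -
      lookahead p r γ Vhat H (σ s) s ≤ δ) :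
    (⨆ s : S, (vStar p r γ s - W s)) ≤ (δ + 2 * γ ^ H * εv) / (1 - γ ^ H) :=
  approx_h_step_lookahead_recursion_general p r γ Rmax εv δ H hp_nonneg hp_sum hγ0 hγ1 hH hr Vhat
    hεv W σ hW hσ
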